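/- Let t_1,...,t_n be distinct points of the circle R/2πZ lying in an open semicircle, and let m_1,...,m_n be positive integers with m_1 + ... + m_n = 2k. Then there exists a unique raked trigonometric polynomial f of degree at most 2k-1 with constant term 1 such that each t_i is a root of f of multiplicity m_i. -/

import Mathlib

/-!
With `z = exp (i s)`, a raked sum `∑_{j<k} a_j cos ((2j+1)s) + b_j sin ((2j+1)s)` equals
`z^(-(2k-1)) P(z²)` for a complex polynomial `P` of degree `< 2k`, and a zero of order `m` at `t`
makes `exp (2it)` a root of `P` of order `m`. On an open semicircle `t ↦ exp (2it)` is injective,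
so zeros of total multiplicity `2k` force `P = 0`. Hence the linear map sending the `2k`
coefficients to the `2k` prescribed derivatives is injective, hence bijective, which gives existence
and uniqueness. If some `t_i` were a zero of higher order, Rolle's theorem would give the
derivative `f'` (again a raked sum without constant term) `2k` zeros on the semicircle, so `f' = 0`
and `f ≡ 1`, which is absurd.
-/

open Real Finset
open Polynomial Complex Function
open scoped ContDiff Nat

noncomputable section

def rakedSum {k : ℕ} (a b : Fin k → ℝ) (s : ℝ) : ℝ :=
  ∑ j : Fin k, (a j * Real.cos ((2 * (j : ℝ) + 1) * s) + b j * Real.sin ((2 * (j : ℝ) + 1) * s))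

theorem contDiff_rakedSum {k : ℕ} (a b : Fin k → ℝ) {n : WithTop ℕ∞} :
    ContDiff ℝ n (rakedSum a b) := by
  unfold rakedSum
  fun_prop

theorem hasDerivAt_rakedSum {k : ℕ} (a b : Fin k → ℝ) (s : ℝ) :
    HasDerivAt (rakedSum a b)
      (rakedSum (fun j => (2 * j + 1) * b j) (fun j => -((2 * j + 1) * a j)) s) s := by
  refine HasDerivAt.fun_sum fun j _ => ?_
  have hlin : HasDerivAt (fun s : ℝ => (2 * (j : ℝ) + 1) * s) (2 * j + 1) s := by
    simpa using (hasDerivAt_id s).const_mul (2 * (j : ℝ) + 1)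
  refine (((hlin.cos).const_mul (a j)).fun_add ((hlin.sin).const_mul (b j))).congr_deriv ?_
  ring

theorem rakedSum_add {k : ℕ} (a b a' b' : Fin k → ℝ) :
    rakedSum (a + a') (b + b') = rakedSum a b + rakedSum a' b' := by
  funext s
  simp only [rakedSum, Pi.add_apply, ← sum_add_distrib]
  exact sum_congr rfl fun j _ => by ring

theorem rakedSum_smul {k : ℕ} (c : ℝ) (a b : Fin k → ℝ) :
    rakedSum (c • a) (c • b) = c • rakedSum a b := by
  funext s
  simp only [rakedSum, Pi.smul_apply, smul_eq_mul, mul_sum]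
  exact sum_congr rfl fun j _ => by ring

theorem sum_range_eq_rakedSum (k : ℕ) (a b : ℕ → ℝ) (s : ℝ) :
    ∑ j ∈ Finset.range k, (a j * Real.cos ((2 * (j : ℝ) + 1) * s) +
      b j * Real.sin ((2 * (j : ℝ) + 1) * s)) = rakedSum (fun j : Fin k => a j) (fun j => b j) s :=
  Finset.sum_range _

def rakedPoly {k : ℕ} (a b : Fin k → ℝ) : ℂ[X] :=
  ∑ j : Fin k, (C ((a j - b j * I) / 2) * X ^ (k + j) + C ((a j + b j * I) / 2) * X ^ (k - 1 - j))

theorem ofReal_mul_cos_add_mul_sin (a b θ : ℝ) :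
    ((a * Real.cos θ + b * Real.sin θ : ℝ) : ℂ)
      = (a - b * I) / 2 * cexp (θ * I) + (a + b * I) / 2 * cexp (-θ * I) := by
  push_cast
  rw [Complex.cos, Complex.sin]
  ring_nf

theorem ofReal_rakedSum {k : ℕ} (a b : Fin k → ℝ) (s : ℝ) :
    (rakedSum a b s : ℂ)
      = cexp (-(2 * k - 1) * I * s) * (rakedPoly a b).eval (cexp (2 * I * s)) := by
  simp only [rakedSum, rakedPoly, ofReal_sum, eval_finsetSum, Finset.mul_sum, eval_add,
    eval_mul, eval_C, eval_pow, eval_X, ofReal_mul_cos_add_mul_sin]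
  refine Finset.sum_congr rfl fun j _ => ?_
  have hj : ((k - 1 - j : ℕ) : ℂ) = k - 1 - j := by
    rw [Nat.sub_sub, Nat.cast_sub (by omega)]; push_cast; ring
  simp only [← Complex.exp_nat_mul, mul_add, mul_left_comm (cexp _), ← Complex.exp_add, hj]
  push_cast
  ring_nf

theorem degree_rakedPoly_lt {k : ℕ} (a b : Fin k → ℝ) : (rakedPoly a b).degree < 2 * k := by
  refine (degree_sum_le _ _).trans_lt ((Finset.sup_lt_iff (WithBot.bot_lt_coe _)).2 fun j _ => ?_)
  refine (degree_add_le _ _).trans_lt (max_lt ?_ ?_) <;>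
    refine (degree_C_mul_X_pow_le _ _).trans_lt ?_ <;> exact_mod_cast (by omega)

theorem coeff_rakedPoly {k : ℕ} (a b : Fin k → ℝ) (j : Fin k) :
    (rakedPoly a b).coeff (k + j) = (a j - b j * I) / 2 := by
  rw [rakedPoly, finsetSum_coeff, Finset.sum_eq_single j]
  · simp only [coeff_add, coeff_C_mul_X_pow]
    simp [show k + j ≠ k - 1 - j by omega]
  · intro j' _ hj'
    simp only [coeff_add, coeff_C_mul_X_pow]
    rw [if_neg (by omega), if_neg (fun h => hj' (Fin.ext (by omega))), add_zero]
  · simp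

theorem eq_zero_of_rakedPoly_eq_zero {k : ℕ} {a b : Fin k → ℝ} (h : rakedPoly a b = 0) :
    a = 0 ∧ b = 0 := by
  have hj (j : Fin k) : (a j - b j * I) / 2 = 0 := by rw [← coeff_rakedPoly, h, coeff_zero]
  refine ⟨funext fun j => ?_, funext fun j => ?_⟩
  · simpa using congrArg re (hj j)
  · simpa using congrArg im (hj j)

def expDeriv (e c : ℂ) (Q : ℂ[X]) : ℂ[X] := C e * Q + C c * X * derivative Q

theorem hasDerivAt_exp_mul_eval (e c : ℂ) (Q : ℂ[X]) (s : ℝ) :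
    HasDerivAt (fun s : ℝ => cexp (e * s) * Q.eval (cexp (c * s)))
      (cexp (e * s) * (expDeriv e c Q).eval (cexp (c * s))) s := by
  have hlin (d : ℂ) : HasDerivAt (fun s : ℝ => cexp (d * s)) (cexp (d * s) * d) s := by
    simpa using ((hasDerivAt_id s).ofReal_comp.const_mul d).cexp
  have hQ : HasDerivAt (fun s : ℝ => Q.eval (cexp (c * s)))
      (Q.derivative.eval (cexp (c * s)) * (cexp (c * s) * c)) s :=
    (Q.hasDerivAt _).comp s (hlin c)
  refine ((hlin e).mul hQ).congr_deriv ?_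
  simp only [expDeriv, eval_add, eval_mul, eval_C, eval_X]
  ring

theorem iteratedDeriv_exp_mul_eval (e c : ℂ) (r : ℕ) (Q : ℂ[X]) :
    iteratedDeriv r (fun s : ℝ => cexp (e * s) * Q.eval (cexp (c * s)))
      = fun s : ℝ => cexp (e * s) * ((expDeriv e c)^[r] Q).eval (cexp (c * s)) := by
  induction r generalizing Q with
  | zero => simp
  | succ r ih =>
    rw [iteratedDeriv_succ', funext fun s => (hasDerivAt_exp_mul_eval e c Q s).deriv, ih,
      iterate_succ_apply]

theorem expDeriv_X_sub_C_pow_succ_mul (e c w : ℂ) (m : ℕ) (R : ℂ[X]) :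
    expDeriv e c ((X - C w) ^ (m + 1) * R) = (X - C w) ^ m *
      (C e * (X - C w) * R + C c * X * (C ((m : ℂ) + 1) * R + (X - C w) * derivative R)) := by
  simp only [expDeriv, derivative_mul, derivative_pow, derivative_sub, derivative_X,
    derivative_C]
  push_cast
  ring

theorem eval_iterate_expDeriv_X_sub_C_pow_mul (e c w : ℂ) (m : ℕ) (R : ℂ[X]) :
    ((expDeriv e c)^[m] ((X - C w) ^ m * R)).eval w = m ! * (c * w) ^ m * R.eval w := by
  induction m generalizing R with
  | zero => simp
  | succ m ih =>
    rw [iterate_succ_apply, expDeriv_X_sub_C_pow_succ_mul, ih]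
    simp only [eval_add, eval_mul, eval_C, eval_X, eval_sub, sub_self, Nat.factorial_succ]
    push_cast
    ring

theorem X_sub_C_pow_dvd_of_eval_iterate_expDeriv {e c w : ℂ} (hc : c ≠ 0) (hw : w ≠ 0)
    {Q : ℂ[X]} {m : ℕ} (h : ∀ r < m, ((expDeriv e c)^[r] Q).eval w = 0) :
    (X - C w) ^ m ∣ Q := by
  induction m with
  | zero => exact one_dvd Q
  | succ m ih =>
    obtain ⟨R, rfl⟩ := ih fun r hr => h r (hr.trans m.lt_succ_self)
    have hR : R.eval w = 0 := by
      have := h m m.lt_succ_self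
      rw [eval_iterate_expDeriv_X_sub_C_pow_mul] at this
      simpa [hc, hw, Nat.factorial_ne_zero] using this
    obtain ⟨S, rfl⟩ := dvd_iff_isRoot.2 hR
    exact ⟨S, by ring⟩

theorem ContinuousLinearMap.iteratedDeriv_comp_left {𝕜 F G : Type*} [NontriviallyNormedField 𝕜]
    [NormedAddCommGroup F] [NormedSpace 𝕜 F] [NormedAddCommGroup G] [NormedSpace 𝕜 G]
    (L : F →L[𝕜] G) {f : 𝕜 → F} {x : 𝕜} {n : ℕ} (hf : ContDiffAt 𝕜 n f x) :
    iteratedDeriv n (L ∘ f) x = L (iteratedDeriv n f x) := by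
  simp only [iteratedDeriv_eq_iteratedFDeriv, L.iteratedFDeriv_comp_left hf le_rfl]
  rfl

theorem X_sub_C_pow_dvd_of_iteratedDeriv_eq_zero {g : ℝ → ℝ} (hg : ContDiff ℝ ∞ g)
    {e c : ℂ} (hc : c ≠ 0) {Q : ℂ[X]}
    (hgQ : ∀ s : ℝ, (g s : ℂ) = cexp (e * s) * Q.eval (cexp (c * s))) {t : ℝ} {m : ℕ}
    (h : ∀ r < m, iteratedDeriv r g t = 0) : (X - C (cexp (c * t))) ^ m ∣ Q := by
  refine X_sub_C_pow_dvd_of_eval_iterate_expDeriv (e := e) hc (exp_ne_zero _) fun r hr => ?_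
  have hgr : ContDiffAt ℝ r g t := hg.contDiffAt.of_le (by exact_mod_cast le_top)
  have hjet := ofRealCLM.iteratedDeriv_comp_left hgr
  rw [show ofRealCLM ∘ g = _ from funext hgQ, iteratedDeriv_exp_mul_eval, ofRealCLM_apply,
    h r hr, ofReal_zero] at hjet
  exact (mul_eq_zero.1 hjet).resolve_left (exp_ne_zero _)

theorem injOn_exp_two_mul_I (α : ℝ) :
    Set.InjOn (fun x : ℝ => cexp (2 * I * x)) (Set.Ioo α (α + π)) := by
  intro x hx y hy hxy
  obtain ⟨n, hn⟩ := Complex.exp_eq_exp_iff_exists_int.1 hxy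
  have hdiff : x - y = n * π := by
    have h2I : (2 * I : ℂ) ≠ 0 := mul_ne_zero two_ne_zero I_ne_zero
    exact_mod_cast mul_left_cancel₀ h2I (by push_cast; linear_combination hn :
      2 * I * ((x - y : ℝ) : ℂ) = 2 * I * ((n * π : ℝ) : ℂ))
  have hlt : |(n : ℝ)| * π < 1 * π := by
    rw [← abs_of_pos pi_pos, ← abs_mul, ← hdiff, one_mul, abs_of_pos pi_pos, abs_sub_lt_iff]
    constructor <;> linarith [hx.1, hx.2, hy.1, hy.2]
  have hn0 : n = 0 :=
    Int.abs_lt_one_iff.1 (by exact_mod_cast lt_of_mul_lt_mul_right hlt pi_pos.le)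
  rw [hn0] at hdiff
  simpa [sub_eq_zero] using hdiff

theorem rakedSum_coeffs_eq_zero {k : ℕ} {κ : Type*} [Fintype κ] {a b : Fin k → ℝ} {α : ℝ}
    {p : κ → ℝ} (hp : ∀ l, p l ∈ Set.Ioo α (α + π)) (hpinj : Injective p) {μ : κ → ℕ}
    (hμ : 2 * k ≤ ∑ l, μ l) (h : ∀ l, ∀ r < μ l, iteratedDeriv r (rakedSum a b) (p l) = 0) :
    a = 0 ∧ b = 0 := by
  set z : κ → ℂ := fun l => cexp (2 * I * p l)
  have hz : Injective z := fun l l' hll => hpinj (injOn_exp_two_mul_I α (hp l) (hp l') hll)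
  have hdvd : ∏ l, (X - C (z l)) ^ μ l ∣ rakedPoly a b :=
    Fintype.prod_dvd_of_coprime ((pairwise_coprime_X_sub_C hz).mono fun _ _ h => h.pow) fun l =>
      X_sub_C_pow_dvd_of_iteratedDeriv_eq_zero (contDiff_rakedSum a b)
        (mul_ne_zero two_ne_zero I_ne_zero) (ofReal_rakedSum a b) (h l)
  refine eq_zero_of_rakedPoly_eq_zero (eq_zero_of_dvd_of_degree_lt hdvd ?_)
  have hmonic : (∏ l, (X - C (z l)) ^ μ l).Monic :=
    monic_prod_of_monic _ _ fun l _ => (monic_X_sub_C _).pow _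
  rw [degree_eq_natDegree hmonic.ne_zero,
    natDegree_prod_of_monic _ _ fun l _ => (monic_X_sub_C _).pow _]
  simp only [natDegree_pow, natDegree_X_sub_C, mul_one]
  exact (degree_rakedPoly_lt a b).trans_le (by exact_mod_cast hμ)

theorem exists_finset_deriv_eq_zero {g : ℝ → ℝ} (hg : Differentiable ℝ g) (S : Finset ℝ)
    (hS : ∀ x ∈ S, g x = 0) :
    ∃ T : Finset ℝ, S.card ≤ T.card + 1 ∧ Disjoint S T ∧
      ∀ y ∈ T, deriv g y = 0 ∧ ∃ x ∈ S, ∃ x' ∈ S, x < y ∧ y < x' := by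
  induction S using Finset.induction_on_max with
  | empty => exact ⟨∅, by simp⟩
  | insert a S hlt ih =>
    obtain ⟨T, hcard, hdisj, hT⟩ := ih fun x hx => hS x (mem_insert_of_mem hx)
    rcases S.eq_empty_or_nonempty with rfl | hne
    · exact ⟨∅, by simp⟩
    have hb : S.max' hne ∈ S := S.max'_mem hne
    obtain ⟨c, hc, hdc⟩ := exists_deriv_eq_zero (hlt _ hb) hg.continuous.continuousOn
      ((hS _ (mem_insert_of_mem hb)).trans (hS a (mem_insert_self a S)).symm)
    have hTc : ∀ y ∈ T, y < c := fun y hy => by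
      obtain ⟨-, -, -, x', hx', -, hyx'⟩ := hT y hy
      exact (hyx'.trans_le (S.le_max' x' hx')).trans hc.1
    have hSc : ∀ x ∈ S, x < c := fun x hx => (S.le_max' x hx).trans_lt hc.1
    refine ⟨insert c T, ?_, ?_, ?_⟩
    · rw [card_insert_of_notMem fun ha => (hlt a ha).false,
        card_insert_of_notMem fun hc' => (hTc c hc').false]
      omega
    · simp only [Finset.disjoint_insert_left, Finset.disjoint_insert_right, Finset.mem_insert,
        not_or]
      exact ⟨⟨hc.2.ne, fun hc' => (hSc c hc').false⟩, fun ha => (hTc a ha).not_gt hc.2, hdisj⟩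
    · rw [Finset.forall_mem_insert]
      refine ⟨⟨hdc, _, mem_insert_of_mem hb, a, mem_insert_self a S, hc⟩, fun y hy => ?_⟩
      obtain ⟨hy0, x, hx, x', hx', hxy⟩ := hT y hy
      exact ⟨hy0, x, mem_insert_of_mem hx, x', mem_insert_of_mem hx', hxy⟩

theorem not_forall_iteratedDeriv_one_add_rakedSum_eq_zero {k : ℕ} {κ : Type*} [Fintype κ]
    (a b : Fin k → ℝ) {α : ℝ} {t : κ → ℝ} (ht : ∀ i, t i ∈ Set.Ioo α (α + π))
    (htinj : Injective t) {μ : κ → ℕ} (hμ : ∀ i, 1 ≤ μ i) (hsum : 2 * k < ∑ i, μ i) :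
    ¬ ∀ i, ∀ r < μ i, iteratedDeriv r (fun s => 1 + rakedSum a b s) (t i) = 0 := by
  classical
  intro h
  set f : ℝ → ℝ := fun s => 1 + rakedSum a b s
  set a' : Fin k → ℝ := fun j => (2 * j + 1) * b j
  set b' : Fin k → ℝ := fun j => -((2 * j + 1) * a j)
  have hf' : deriv f = rakedSum a' b' :=
    funext fun s => ((hasDerivAt_rakedSum a b s).const_add 1).deriv
  have hf0 : ∀ x ∈ univ.image t, f x = 0 := by
    simpa using fun i => h i 0 (hμ i)
  obtain ⟨T, hcard, hdisj, hT⟩ := exists_finset_deriv_eq_zero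
    ((contDiff_rakedSum a b (n := 1)).differentiable one_ne_zero |>.const_add 1) (univ.image t) hf0
  rw [card_image_of_injective _ htinj, card_univ] at hcard
  have hT_mem : ∀ y ∈ T, y ∈ Set.Ioo α (α + π) := fun y hy => by
    obtain ⟨-, x, hx, x', hx', hxy, hyx'⟩ := hT y hy
    obtain ⟨i, -, rfl⟩ := mem_image.1 hx
    obtain ⟨i', -, rfl⟩ := mem_image.1 hx'
    exact ⟨(ht i).1.trans hxy, hyx'.trans (ht i').2⟩
  have hsum' : ∑ i, (μ i - 1) + Fintype.card κ = ∑ i, μ i := by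
    rw [← card_univ, card_eq_sum_ones, ← sum_add_distrib]
    exact sum_congr rfl fun i _ => Nat.sub_add_cancel (hμ i)
  -- `f'` vanishes to order `μ i - 1` at `t i` and at every Rolle point in `T`: `2k` zeros in all
  obtain ⟨ha', hb'⟩ := rakedSum_coeffs_eq_zero (a := a') (b := b')
    (p := Sum.elim t ((↑) : T → ℝ)) (μ := Sum.elim (fun i => μ i - 1) 1)
    (Sum.forall.2 ⟨ht, fun y => hT_mem y y.2⟩)
    (htinj.sumElim Subtype.val_injective fun i y hy =>
      disjoint_left.1 hdisj (mem_image_of_mem t (mem_univ i)) (hy ▸ y.2))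
    (by simp only [Fintype.sum_sum_type, Sum.elim_inl, Sum.elim_inr, Pi.one_apply,
          sum_const, card_univ, Fintype.card_coe, smul_eq_mul, mul_one]; omega)
    (Sum.forall.2 ⟨fun i r hr => by
        rw [Sum.elim_inl] at hr
        rw [Sum.elim_inl, ← hf', ← iteratedDeriv_succ']
        exact h i (r + 1) (by omega),
      fun y r hr => by
        obtain rfl : r = 0 := by simpa using hr
        rw [Sum.elim_inr, iteratedDeriv_zero, ← hf']; exact (hT y y.2).1⟩)
  have hab : a = 0 ∧ b = 0 := by
    constructor <;> funext j
    · simpa [b', show (2 * (j : ℝ) + 1) ≠ 0 by positivity] using congrFun hb' j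
    · simpa [a', show (2 * (j : ℝ) + 1) ≠ 0 by positivity] using congrFun ha' j
  obtain ⟨i, -, -⟩ := exists_ne_zero_of_sum_ne_zero (s := univ) (f := μ) (by omega)
  simpa [f, hab.1, hab.2, rakedSum] using h i 0 (hμ i)

theorem iteratedDeriv_one_add_rakedSum_ne_zero {k : ℕ} {κ : Type*} [Fintype κ]
    {a b : Fin k → ℝ} {α : ℝ} {t : κ → ℝ} (ht : ∀ i, t i ∈ Set.Ioo α (α + π))
    (htinj : Injective t) {m : κ → ℕ} (hm : ∀ i, 1 ≤ m i) (hsum : ∑ i, m i = 2 * k)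
    (h : ∀ i, ∀ r < m i, iteratedDeriv r (fun s => 1 + rakedSum a b s) (t i) = 0) (i : κ) :
    iteratedDeriv (m i) (fun s => 1 + rakedSum a b s) (t i) ≠ 0 := by
  classical
  intro hi
  refine not_forall_iteratedDeriv_one_add_rakedSum_eq_zero a b ht htinj (μ := m + Pi.single i 1)
    (fun i' => (hm i').trans (Nat.le_add_right _ _)) (by simp [sum_add_distrib, hsum])
    fun i' r hr => ?_
  rcases eq_or_ne i' i with rfl | hne
  · rcases Nat.lt_succ_iff_lt_or_eq.1 (by simpa using hr) with hr | rfl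
    exacts [h i' r hr, hi]
  · exact h i' r (by simpa [hne] using hr)

def rakedJet {k : ℕ} {κ : Type*} (t : κ → ℝ) (m : κ → ℕ) :
    (Fin k → ℝ) × (Fin k → ℝ) →ₗ[ℝ] ((i : κ) × Fin (m i) → ℝ) where
  toFun ab q := iteratedDeriv q.2 (rakedSum ab.1 ab.2) (t q.1)
  map_add' ab ab' := funext fun q => by
    simp only [Prod.fst_add, Prod.snd_add, rakedSum_add, Pi.add_apply]
    exact iteratedDeriv_add (contDiff_rakedSum _ _).contDiffAt (contDiff_rakedSum _ _).contDiffAt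
  map_smul' c ab := funext fun q => by
    simp only [Prod.smul_fst, Prod.smul_snd, rakedSum_smul, iteratedDeriv_const_smul_field,
      RingHom.id_apply, Pi.smul_apply]

theorem existsUnique_one_add_rakedSum {k : ℕ} {κ : Type*} [Fintype κ] {α : ℝ} {t : κ → ℝ}
    (ht : ∀ i, t i ∈ Set.Ioo α (α + π)) (htinj : Injective t) {m : κ → ℕ}
    (hsum : ∑ i, m i = 2 * k) :
    ∃! ab : (Fin k → ℝ) × (Fin k → ℝ),
      ∀ i, ∀ r < m i, iteratedDeriv r (fun s => 1 + rakedSum ab.1 ab.2 s) (t i) = 0 := by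
  have hinj : Injective (rakedJet (k := k) t m) := by
    rw [← LinearMap.ker_eq_bot, LinearMap.ker_eq_bot']
    intro ab hab
    obtain ⟨ha, hb⟩ := rakedSum_coeffs_eq_zero ht htinj hsum.ge
      fun i r hr => congrFun hab ⟨i, r, hr⟩
    exact Prod.ext ha hb
  have hsurj : Surjective (rakedJet (k := k) t m) := by
    refine (LinearMap.injective_iff_surjective_of_finrank_eq_finrank ?_).1 hinj
    simp [Module.finrank_fintype_fun_eq_card, hsum, two_mul]
  have hjets (ab : (Fin k → ℝ) × (Fin k → ℝ)) :
      (∀ i, ∀ r < m i, iteratedDeriv r (fun s => 1 + rakedSum ab.1 ab.2 s) (t i) = 0) ↔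
        rakedJet t m ab = fun q => -iteratedDeriv q.2 (fun _ : ℝ => (1 : ℝ)) (t q.1) := by
    have hadd (r : ℕ) (x : ℝ) : iteratedDeriv r (fun s => 1 + rakedSum ab.1 ab.2 s) x =
        iteratedDeriv r (fun _ : ℝ => (1 : ℝ)) x + iteratedDeriv r (rakedSum ab.1 ab.2) x :=
      iteratedDeriv_fun_add contDiffAt_const (contDiff_rakedSum _ _).contDiffAt
    simp only [funext_iff, Sigma.forall, Fin.forall_iff, hadd, add_eq_zero_iff_eq_neg']
    rfl
  simp only [hjets]
  exact Bijective.existsUnique ⟨hinj, hsurj⟩ _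

end

theorem raked_exists_unique_general (k n : ℕ)
    (α : ℝ) (t : Fin n → ℝ) (ht : ∀ i, t i ∈ Set.Ioo α (α + Real.pi))
    (htinj : Function.Injective t)
    (m : Fin n → ℕ) (hm : ∀ i, 1 ≤ m i) (hsum : ∑ i, m i = 2 * k) :
    ∃! f : ℝ → ℝ,
      (∃ a b : ℕ → ℝ, ∀ s : ℝ, f s = 1 + ∑ j ∈ Finset.range k,
          (a j * Real.cos ((2 * (j : ℝ) + 1) * s) +
            b j * Real.sin ((2 * (j : ℝ) + 1) * s))) ∧
      ∀ i, (∀ r < m i, iteratedDeriv r f (t i) = 0) ∧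
        iteratedDeriv (m i) f (t i) ≠ 0 := by
  obtain ⟨⟨a, b⟩, hab, huniq⟩ := existsUnique_one_add_rakedSum ht htinj hsum
  have hext (c : Fin k → ℝ) : (fun j : Fin k => extend Fin.val c 0 j) = c :=
    funext fun j => Fin.val_injective.extend_apply c 0 j
  refine ⟨fun s => 1 + rakedSum a b s, ⟨⟨extend Fin.val a 0, extend Fin.val b 0, fun s => ?_⟩,
    fun i => ⟨hab i, iteratedDeriv_one_add_rakedSum_ne_zero ht htinj hm hsum hab i⟩⟩, ?_⟩
  · rw [sum_range_eq_rakedSum, hext, hext]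
  · rintro g ⟨⟨a', b', hg⟩, hg0⟩
    simp only [funext hg, sum_range_eq_rakedSum] at hg0 ⊢
    cases huniq (fun j => a' j, fun j => b' j) fun i => (hg0 i).1
    rfl

theorem raked_exists_unique (k n : ℕ) (hk : 1 ≤ k)
    (α : ℝ) (t : Fin n → ℝ) (ht : ∀ i, t i ∈ Set.Ioo α (α + Real.pi))
    (htinj : Function.Injective t)
    (m : Fin n → ℕ) (hm : ∀ i, 1 ≤ m i) (hsum : ∑ i, m i = 2 * k) :
    ∃! f : ℝ → ℝ,
      (∃ a b : ℕ → ℝ, ∀ s : ℝ, f s = 1 + ∑ j ∈ Finset.range k,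
          (a j * Real.cos ((2 * (j : ℝ) + 1) * s) +
            b j * Real.sin ((2 * (j : ℝ) + 1) * s))) ∧
      ∀ i, (∀ r < m i, iteratedDeriv r f (t i) = 0) ∧
        iteratedDeriv (m i) f (t i) ≠ 0 :=
  raked_exists_unique_general k n α t ht htinj m hm hsum
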